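/- (Theorem 2, stated conditionally on the per-window drift-plus-penalty inequality (28) that the P-ENSRA algorithm guarantees.) Let T ≥ 1, W ≥ 1, L ≥ 1, V > 0, θ > 0, B₂ ≥ 0 and Pθ ≥ 0. Let Q_l : ℕ → ℝ satisfy Q_l(t) ≥ 0 for all t and Q_l(0) = 0 for all l ∈ {1,…,L}, and let P : ℕ → ℝ satisfy P(t) ≥ 0 for all t. Suppose that for every window index h ∈ ℕ: (1/2)·∑_{l=1}^{L} Q_l((h+1)WT)² − (1/2)·∑_{l=1}^{L} Q_l(hWT)² + V·∑_{τ=hWT}^{(h+1)WT−1} P(τ) ≤ B₂·W·T + V·W·T·Pθ − θ·T·∑_{l=1}^{L} ∑_{w=0}^{W−1} Q_l(hWT + wT). Then: (a) limsup_{H→∞} (1/(HWT))·∑_{t=0}^{HWT−1} P(t) ≤ Pθ + B₂/V, and (b) limsup_{H→∞} (1/(HW))·∑_{h=0}^{H−1} ∑_{w=0}^{W−1} ∑_{l=1}^{L} Q_l(hWT + wT) ≤ (B₂ + V·Pθ)/θ. -/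

import Mathlib

/-!
Summing the drift-plus-penalty inequality over the first `H` windows telescopes the quadratic
Lyapunov function `½ ∑ₗ Qₗ²`, which starts at `0` and stays nonnegative, so
`V · (power up to HWT) + θT · (accumulated frame-start backlog) ≤ H (B₂WT + VWTPθ)`.
Both terms on the left are nonnegative; dropping either one and dividing by `HWT`, resp. `θTHW`,
bounds the corresponding average uniformly in `H`, hence also its limsup.
-/

open Filter Finset

theorem sum_range_sum_Ico_mul {M : Type*} [AddCommMonoid M] (f : ℕ → M) (n H : ℕ) :
    ∑ h ∈ range H, ∑ t ∈ Ico (h * n) ((h + 1) * n), f t = ∑ t ∈ range (H * n), f t := by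
  induction H with
  | zero => simp
  | succ H ih =>
    rw [sum_range_succ, ih, sum_range_add_sum_Ico _ (Nat.mul_le_mul_right n H.le_succ)]

theorem add_sum_range_le_of_increment_le {Φ a : ℕ → ℝ} {C : ℝ}
    (h : ∀ n, Φ (n + 1) - Φ n + a n ≤ C) (H : ℕ) :
    Φ H - Φ 0 + ∑ n ∈ range H, a n ≤ H * C := by
  calc Φ H - Φ 0 + ∑ n ∈ range H, a n = ∑ n ∈ range H, (Φ (n + 1) - Φ n + a n) := by
        rw [sum_add_distrib, sum_range_sub]
    _ ≤ ∑ _n ∈ range H, C := sum_le_sum fun n _ => h n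
    _ = H * C := by simp

theorem limsup_one_div_mul_le {ι : Type*} {l : Filter ι} [l.NeBot] {s d : ι → ℝ} {c : ℝ}
    (hs : ∀ i, 0 ≤ s i) (hd : ∀ᶠ i in l, 0 < d i) (hle : ∀ i, s i ≤ c * d i) :
    limsup (fun i => 1 / d i * s i) l ≤ c := by
  refine limsup_le_of_le (isCoboundedUnder_le_of_eventually_le l (x := 0) ?_) ?_
  · filter_upwards [hd] with i hi using mul_nonneg (by positivity) (hs i)
  · filter_upwards [hd] with i hi
    rw [one_div_mul_eq_div, div_le_iff₀ hi]
    exact hle i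

theorem theorem2_PENSRA_general
    (T W L : ℕ) (hT : 1 ≤ T) (hW : 1 ≤ W)
    (V θ B2 Pθ : ℝ) (hV : 0 < V) (hθ : 0 < θ)
    (Q : ℕ → ℕ → ℝ) (hQnonneg : ∀ l t, 0 ≤ Q l t) (hQ0 : ∀ l, Q l 0 = 0)
    (P : ℕ → ℝ) (hP : ∀ t, 0 ≤ P t)
    (hdpp : ∀ h : ℕ,
      (1 / 2) * ∑ l ∈ Finset.range L, (Q l ((h + 1) * W * T)) ^ 2
        - (1 / 2) * ∑ l ∈ Finset.range L, (Q l (h * W * T)) ^ 2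
        + V * ∑ τ ∈ Finset.Ico (h * W * T) ((h + 1) * W * T), P τ
      ≤ B2 * W * T + V * W * T * Pθ
        - θ * T * ∑ l ∈ Finset.range L, ∑ w ∈ Finset.range W, Q l (h * W * T + w * T)) :
    Filter.limsup
        (fun H : ℕ => (1 / ((H : ℝ) * W * T)) * ∑ t ∈ Finset.range (H * W * T), P t)
        Filter.atTop
      ≤ Pθ + B2 / V ∧
    Filter.limsup
        (fun H : ℕ => (1 / ((H : ℝ) * W)) *
          ∑ h ∈ Finset.range H, ∑ w ∈ Finset.range W, ∑ l ∈ Finset.range L,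
            Q l (h * W * T + w * T))
        Filter.atTop
      ≤ (B2 + V * Pθ) / θ := by
  set S : ℕ → ℝ := fun H =>
    ∑ h ∈ range H, ∑ w ∈ range W, ∑ l ∈ range L, Q l (h * W * T + w * T)
  have hS : ∀ H, 0 ≤ S H := fun H =>
    sum_nonneg fun _ _ => sum_nonneg fun _ _ => sum_nonneg fun _ _ => hQnonneg _ _
  have hPsum : ∀ n, 0 ≤ ∑ t ∈ range n, P t := fun n => sum_nonneg fun t _ => hP t
  have cumulative : ∀ H : ℕ, V * ∑ t ∈ range (H * W * T), P t + θ * T * S H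
      ≤ H * (B2 * W * T + V * W * T * Pθ) := by
    intro H
    have telescoped := add_sum_range_le_of_increment_le
      (Φ := fun h => (1 / 2) * ∑ l ∈ range L, Q l (h * W * T) ^ 2)
      (a := fun h => V * ∑ τ ∈ Ico (h * (W * T)) ((h + 1) * (W * T)), P τ
        + θ * T * ∑ w ∈ range W, ∑ l ∈ range L, Q l (h * W * T + w * T))
      (C := B2 * W * T + V * W * T * Pθ)
      (fun h => by simp only [sum_comm (s := range W), ← Nat.mul_assoc]; linarith [hdpp h]) H
    have hΦ : 0 ≤ (1 / 2) * ∑ l ∈ range L, Q l (H * W * T) ^ 2 := by positivity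
    simp only [hQ0, zero_mul, zero_pow two_ne_zero, sum_const_zero, mul_zero, sum_add_distrib,
      ← mul_sum, sum_range_sum_Ico_mul] at telescoped
    rw [← Nat.mul_assoc] at telescoped
    simp only [S]
    linarith
  constructor
  · refine limsup_one_div_mul_le (fun H => hPsum _) ?_ fun H => ?_
    · filter_upwards [eventually_gt_atTop 0] with H hH
      positivity
    · have := mul_nonneg (mul_nonneg hθ.le (by positivity : (0 : ℝ) ≤ T)) (hS H)
      rw [← mul_le_mul_iff_of_pos_left hV]
      calc V * ∑ t ∈ range (H * W * T), P t ≤ H * (B2 * W * T + V * W * T * Pθ) := by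
            linarith [cumulative H]
        _ = V * ((Pθ + B2 / V) * (H * W * T)) := by field_simp; ring
  · refine limsup_one_div_mul_le hS ?_ fun H => ?_
    · filter_upwards [eventually_gt_atTop 0] with H hH
      positivity
    · have := mul_nonneg hV.le (hPsum (H * W * T))
      have hθT : 0 < θ * T := by positivity
      rw [← mul_le_mul_iff_of_pos_left hθT]
      calc θ * T * S H ≤ H * (B2 * W * T + V * W * T * Pθ) := by linarith [cumulative H]
        _ = θ * T * ((B2 + V * Pθ) / θ * (H * W)) := by field_simp

/-- Theorem 2, stated conditionally on the per-window θ-controlled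
drift-plus-penalty inequality (28) guaranteed by the P-ENSRA algorithm:
(a) the time average power is at most `Pθ + B₂/V`, and (b) the frame-start
average total queue length is at most `(B₂ + V Pθ)/θ`. -/
theorem theorem2_PENSRA
    (T W L : ℕ) (hT : 1 ≤ T) (hW : 1 ≤ W) (hL : 1 ≤ L)
    (V θ B2 Pθ : ℝ) (hV : 0 < V) (hθ : 0 < θ) (hB2 : 0 ≤ B2) (hPθ : 0 ≤ Pθ)
    (Q : ℕ → ℕ → ℝ) (hQnonneg : ∀ l t, 0 ≤ Q l t) (hQ0 : ∀ l, Q l 0 = 0)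
    (P : ℕ → ℝ) (hP : ∀ t, 0 ≤ P t)
    (hdpp : ∀ h : ℕ,
      (1 / 2) * ∑ l ∈ Finset.range L, (Q l ((h + 1) * W * T)) ^ 2
        - (1 / 2) * ∑ l ∈ Finset.range L, (Q l (h * W * T)) ^ 2
        + V * ∑ τ ∈ Finset.Ico (h * W * T) ((h + 1) * W * T), P τ
      ≤ B2 * W * T + V * W * T * Pθ
        - θ * T * ∑ l ∈ Finset.range L, ∑ w ∈ Finset.range W, Q l (h * W * T + w * T)) :
    Filter.limsup
        (fun H : ℕ => (1 / ((H : ℝ) * W * T)) * ∑ t ∈ Finset.range (H * W * T), P t)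
        Filter.atTop
      ≤ Pθ + B2 / V ∧
    Filter.limsup
        (fun H : ℕ => (1 / ((H : ℝ) * W)) *
          ∑ h ∈ Finset.range H, ∑ w ∈ Finset.range W, ∑ l ∈ Finset.range L,
            Q l (h * W * T + w * T))
        Filter.atTop
      ≤ (B2 + V * Pθ) / θ :=
  theorem2_PENSRA_general T W L hT hW V θ B2 Pθ hV hθ Q hQnonneg hQ0 P hP hdpp
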